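/- arXiv:2012.12492 — 3 statements merged into one kernel-verified Lean document; each statement's English description precedes it below -/
import Mathlib

section
/- For every k ≥ 1, the power 3^k is a perfect totient number: the sum ∑_{i=1}^{R(3^k)} φ^[i](3^k) equals 3^k. -/
/-! Since `φ (3 ^ (k + 1)) = 2 * 3 ^ k` and `φ (2 * m) = φ m` for odd `m`,
`φ^[i + 2] (3 ^ (k + 1)) = φ^[i + 1] (3 ^ k)`: after one step, the orbit of `3 ^ (k + 1)` runs
through the orbit of `3 ^ k`, one step late. By induction on `k`, the orbit of `3 ^ k` first
reaches `1` at step `k + 1`, and the extra first term `2 * 3 ^ k` raises the sum of the iterates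
from `3 ^ k` to `3 ^ (k + 1)`. -/

/-- `R n` is the least `k ≥ 1` with `φ^[k] n = 1`. -/
noncomputable def R (n : ℕ) : ℕ := sInf {k : ℕ | 1 ≤ k ∧ Nat.totient^[k] n = 1}

open Finset Function

lemma R_eq_succ_of_iterate {n m : ℕ} (hm : Nat.totient^[m + 1] n = 1)
    (hlt : ∀ i < m, Nat.totient^[i + 1] n ≠ 1) : R n = m + 1 := by
  refine le_antisymm (Nat.sInf_le ⟨m.succ_pos, hm⟩) (le_csInf ⟨m + 1, m.succ_pos, hm⟩ ?_)
  rintro j ⟨hj, hj1⟩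
  obtain ⟨i, rfl⟩ := Nat.exists_eq_add_of_le' hj
  by_contra! hij
  exact hlt i (by omega) hj1

lemma sum_Icc_one_eq_sum_range {M : Type*} [AddCommMonoid M] (f : ℕ → M) (n : ℕ) :
    ∑ i ∈ Icc 1 n, f i = ∑ i ∈ range n, f (i + 1) := by
  rw [range_eq_Ico, sum_Ico_add' f 0 n 1]
  rfl

lemma totient_three_pow_succ (k : ℕ) : Nat.totient (3 ^ (k + 1)) = 2 * 3 ^ k := by
  rw [Nat.totient_prime_pow_succ Nat.prime_three, mul_comm]

lemma totient_iterate_three_pow_succ (k i : ℕ) :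
    Nat.totient^[i + 2] (3 ^ (k + 1)) = Nat.totient^[i + 1] (3 ^ k) := by
  have hodd : Odd (3 ^ k) := Odd.pow (by decide)
  rw [iterate_succ_apply, iterate_succ_apply, iterate_succ_apply, totient_three_pow_succ,
    Nat.totient_two_mul_of_odd hodd]

lemma totient_iterate_three_pow_eq_one (k : ℕ) : Nat.totient^[k + 1] (3 ^ k) = 1 := by
  induction k with
  | zero => simp
  | succ k ih => rwa [totient_iterate_three_pow_succ]

lemma one_lt_totient_iterate_three_pow {k i : ℕ} (hi : i < k) :
    1 < Nat.totient^[i + 1] (3 ^ k) := by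
  induction k generalizing i with
  | zero => omega
  | succ k ih =>
    rcases i with _ | i
    · rw [iterate_one, totient_three_pow_succ]
      have := Nat.one_le_pow k 3 (by norm_num)
      omega
    · rw [totient_iterate_three_pow_succ]
      exact ih (by omega)

lemma R_three_pow (k : ℕ) : R (3 ^ k) = k + 1 :=
  R_eq_succ_of_iterate (totient_iterate_three_pow_eq_one k)
    fun _ hi => (one_lt_totient_iterate_three_pow hi).ne'

lemma sum_totient_iterate_three_pow (k : ℕ) :
    ∑ i ∈ range (k + 1), Nat.totient^[i + 1] (3 ^ k) = 3 ^ k := by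
  induction k with
  | zero => simp
  | succ k ih =>
    rw [sum_range_succ', iterate_one, totient_three_pow_succ]
    simp_rw [totient_iterate_three_pow_succ, ih]
    ring

theorem three_pow_perfect_totient_general (k : ℕ) :
    ∑ i ∈ Finset.Icc 1 (R (3 ^ k)), Nat.totient^[i] (3 ^ k) = 3 ^ k := by
  rw [R_three_pow, sum_Icc_one_eq_sum_range, sum_totient_iterate_three_pow]

theorem three_pow_perfect_totient (k : ℕ) (hk : 1 ≤ k) :
    ∑ i ∈ Finset.Icc 1 (R (3 ^ k)), Nat.totient^[i] (3 ^ k) = 3 ^ k :=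
  three_pow_perfect_totient_general k
end

section
/- If p is an odd prime and p^k (k ≥ 1) is a perfect totient number, then p = 3. -/
/-!
The first two terms of the totient trajectory of `n = p ^ (j + 1)` already exceed `n`:
`φ n = p ^ j * (p - 1)`, and `φ (φ n) ≥ φ (p ^ j) * φ (p - 1) ≥ 2 * φ (p ^ j) > p ^ j`
as soon as `p - 1 ≥ 3`. For `p = 3` this fails because `φ 2 = 1`. The perfect-totient equation
itself forces the trajectory to have at least two terms, so nothing about `R` is needed.
-/

open Finset

namespace Nat

theorem two_le_totient {n : ℕ} (hn : 3 ≤ n) : 2 ≤ φ n := by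
  obtain ⟨r, hr⟩ := totient_even (by omega : 2 < n)
  have : 0 < φ n := totient_pos.mpr (by omega)
  omega

theorem lt_two_mul_totient_prime_pow {p : ℕ} (hp : p.Prime) (hp2 : p ≠ 2) :
    ∀ j : ℕ, p ^ j < 2 * φ (p ^ j)
  | 0 => by simp
  | j + 1 => by
    have hp3 : 3 ≤ p := by have := hp.two_le; omega
    rw [totient_prime_pow_succ hp, pow_succ]
    calc p ^ j * p < p ^ j * (2 * (p - 1)) :=
          Nat.mul_lt_mul_of_pos_left (by omega) (pow_pos hp.pos j)
      _ = 2 * (p ^ j * (p - 1)) := by ring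

theorem pow_lt_totient_totient_prime_pow_succ {p : ℕ} (hp : p.Prime) (hp5 : 5 ≤ p) (j : ℕ) :
    p ^ j < φ (φ (p ^ (j + 1))) :=
  calc p ^ j < 2 * φ (p ^ j) := lt_two_mul_totient_prime_pow hp (by omega) j
    _ = φ (p ^ j) * 2 := mul_comm _ _
    _ ≤ φ (p ^ j) * φ (p - 1) := Nat.mul_le_mul_left _ (two_le_totient (by omega))
    _ ≤ φ (p ^ j * (p - 1)) := totient_super_multiplicative _ _
    _ = φ (φ (p ^ (j + 1))) := by rw [totient_prime_pow_succ hp]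

theorem totient_add_totient_totient_le_of_sum_iterate_eq {n K : ℕ} (hn : 1 < n)
    (h : ∑ i ∈ Icc 1 K, φ^[i] n = n) : φ n + φ (φ n) ≤ n := by
  have hK : 2 ≤ K := by
    by_contra! hK
    interval_cases K
    · simp only [Icc_eq_empty_of_lt one_pos, sum_empty] at h
      omega
    · simp only [Icc_self, sum_singleton, Function.iterate_one] at h
      exact (totient_lt n hn).ne h
  calc φ n + φ (φ n) = ∑ i ∈ Icc 1 2, φ^[i] n := by
        simp [sum_Icc_succ_top, Function.iterate_succ_apply']
    _ ≤ ∑ i ∈ Icc 1 K, φ^[i] n := sum_le_sum_of_subset (Icc_subset_Icc_right hK)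
    _ = n := h

end Nat

theorem prime_pow_perfect_totient (p k : ℕ) (hp : p.Prime) (hodd : Odd p) (hk : 1 ≤ k)
    (hptn : ∑ i ∈ Finset.Icc 1 (R (p ^ k)), Nat.totient^[i] (p ^ k) = p ^ k) :
    p = 3 := by
  by_contra hp3
  have hp5 : 5 ≤ p := by
    obtain ⟨m, rfl⟩ := hodd
    have := hp.two_le
    omega
  obtain ⟨j, rfl⟩ : ∃ j, k = j + 1 := ⟨k - 1, by omega⟩
  have hle := Nat.totient_add_totient_totient_le_of_sum_iterate_eq
    (Nat.one_lt_pow (by omega) hp.one_lt) hptn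
  have hlt := Nat.pow_lt_totient_totient_prime_pow_succ hp hp5 j
  rw [Nat.totient_prime_pow_succ hp] at hle hlt
  have hsplit : p ^ (j + 1) = p ^ j * (p - 1) + p ^ j := by
    rw [pow_succ, ← Nat.mul_succ]; congr 1; omega
  omega
end

section
/- If n is a perfect totient number and 4n + 1 is prime, then 3(4n + 1) is also a perfect totient number. -/
open Finset Nat

theorem Finset.sum_Icc_one_succ_eq_add {M : Type*} [AddCommMonoid M] (f : ℕ → M) (r : ℕ) :
    ∑ i ∈ Icc 1 (r + 1), f i = f 1 + ∑ i ∈ Icc 1 r, f (i + 1) := by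
  induction r with
  | zero => simp
  | succ r ih =>
    rw [sum_Icc_succ_top (by omega), ih, sum_Icc_succ_top (by omega), add_assoc]

theorem Nat.exists_iterate_totient_eq_one {m : ℕ} (hm : m ≠ 0) : ∃ k, φ^[k] m = 1 := by
  induction m using Nat.strong_induction_on with
  | _ m ih =>
    obtain rfl | hm1 := eq_or_ne m 1
    · exact ⟨0, rfl⟩
    obtain ⟨k, hk⟩ := ih (φ m) (totient_lt m (by omega)) (totient_eq_zero.not.mpr hm)
    exact ⟨k + 1, hk⟩

theorem R_eq_sInf {m : ℕ} (hm : m ≠ 1) : R m = sInf {k | φ^[k] m = 1} :=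
  congrArg sInf <| Set.ext fun k =>
    ⟨And.right, fun hk => ⟨Nat.one_le_iff_ne_zero.mpr (by rintro rfl; exact hm hk), hk⟩⟩

theorem R_of_totient_eq_one {m : ℕ} (h : φ m = 1) : R m = 1 :=
  le_antisymm (Nat.sInf_le ⟨le_rfl, h⟩) (le_csInf ⟨1, le_rfl, h⟩ fun _ hk => hk.1)

theorem R_eq_R_totient_add_one {m : ℕ} (h : 1 < φ m) : R m = R (φ m) + 1 := by
  have hm1 : m ≠ 1 := by rintro rfl; simp at h
  have hm0 : m ≠ 0 := by rintro rfl; simp at h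
  have hpos : 1 ≤ sInf {k | φ^[k] m = 1} := by
    refine Nat.one_le_iff_ne_zero.mpr fun h0 => ?_
    rcases Nat.sInf_eq_zero.mp h0 with h0 | hempty
    · exact hm1 h0
    · obtain ⟨k, hk⟩ := exists_iterate_totient_eq_one hm0
      exact hempty.subset hk
  rw [R_eq_sInf hm1, R_eq_sInf h.ne', ← Nat.sInf_add hpos]
  simp only [Function.iterate_succ_apply]

noncomputable def iterTotientSum (m : ℕ) : ℕ := ∑ i ∈ Icc 1 (R m), φ^[i] m

theorem iterTotientSum_of_totient_eq_one {m : ℕ} (h : φ m = 1) : iterTotientSum m = 1 := by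
  simp [iterTotientSum, R_of_totient_eq_one h, h]

theorem iterTotientSum_eq_totient_add {m : ℕ} (h : 1 < φ m) :
    iterTotientSum m = φ m + iterTotientSum (φ m) := by
  rw [iterTotientSum, R_eq_R_totient_add_one h, sum_Icc_one_succ_eq_add]
  simp only [Function.iterate_succ_apply, Function.iterate_zero_apply, iterTotientSum]

theorem iterTotientSum_congr_totient {a b : ℕ} (h : φ a = φ b) :
    iterTotientSum a = iterTotientSum b := by
  rcases Nat.lt_trichotomy (φ a) 1 with h0 | h1 | h2
  · have ha : a = 0 := totient_eq_zero.mp (by omega)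
    have hb : b = 0 := totient_eq_zero.mp (by omega)
    rw [ha, hb]
  · rw [iterTotientSum_of_totient_eq_one h1, iterTotientSum_of_totient_eq_one (h ▸ h1)]
  · rw [iterTotientSum_eq_totient_add h2, iterTotientSum_eq_totient_add (h ▸ h2 : 1 < φ b), h]

theorem two_mul_totient_le_of_even {m : ℕ} (hm : Even m) : 2 * φ m ≤ m := by
  induction m using Nat.strong_induction_on with
  | _ m ih =>
    obtain ⟨k, rfl⟩ := hm
    rw [← two_mul]
    rcases Nat.even_or_odd k with hk | hk
    · obtain rfl | hk0 := eq_or_ne k 0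
      · simp
      have := ih k (by omega) hk
      rw [totient_two_mul_of_even hk]
      omega
    · have := totient_le k
      rw [totient_two_mul_of_odd hk]
      omega

theorem iterTotientSum_lt_self_of_even {m : ℕ} (hm : Even m) (hm0 : m ≠ 0) :
    iterTotientSum m < m := by
  induction m using Nat.strong_induction_on with
  | _ m ih =>
    obtain rfl | hm2 : m = 2 ∨ 2 < m := by obtain ⟨k, rfl⟩ := hm; omega
    · rw [iterTotientSum_of_totient_eq_one (by decide)]
      omega
    have hφ_even : Even (φ m) := totient_even hm2
    have hφ_pos : 0 < φ m := totient_pos.mpr (by omega)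
    have hφ_one_lt : 1 < φ m := by obtain ⟨k, hk⟩ := hφ_even; omega
    have := ih (φ m) (totient_lt m (by omega)) hφ_even hφ_pos.ne'
    have := two_mul_totient_le_of_even hm
    rw [iterTotientSum_eq_totient_add hφ_one_lt]
    omega

theorem odd_of_iterTotientSum_eq_self {m : ℕ} (hm0 : m ≠ 0) (h : iterTotientSum m = m) :
    Odd m :=
  Nat.not_even_iff_odd.mp fun hm => (iterTotientSum_lt_self_of_even hm hm0).ne h

theorem totient_four_mul_of_even {k : ℕ} (hk : Even k) : φ (4 * k) = 4 * φ k := by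
  rw [show 4 * k = 2 * (2 * k) by ring, totient_two_mul_of_even (even_two_mul k),
    totient_two_mul_of_even hk]
  ring

theorem iterTotientSum_four_mul {k : ℕ} (hk : Even k) (hk0 : k ≠ 0) :
    iterTotientSum (4 * k) = 4 * iterTotientSum k + 3 := by
  induction k using Nat.strong_induction_on with
  | _ k ih =>
    have hk1 : 1 < k := by obtain ⟨j, rfl⟩ := hk; omega
    obtain rfl | hk2 : k = 2 ∨ 2 < k := by omega
    · have h8 : φ 8 = 4 := by decide
      have h4 : φ 4 = 2 := by decide
      have h2 : φ 2 = 1 := by decide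
      rw [show 4 * 2 = 8 from rfl, iterTotientSum_eq_totient_add (by omega), h8,
        iterTotientSum_eq_totient_add (by omega), h4, iterTotientSum_of_totient_eq_one h2]
    have hφ_even : Even (φ k) := totient_even hk2
    have hφ : 1 < φ k := by
      obtain ⟨j, hj⟩ := hφ_even
      have := totient_pos.mpr (by omega : 0 < k)
      omega
    have h4φ : 1 < φ (4 * k) := by rw [totient_four_mul_of_even hk]; omega
    rw [iterTotientSum_eq_totient_add h4φ, totient_four_mul_of_even hk,
      ih (φ k) (totient_lt k hk1) hφ_even (by omega), iterTotientSum_eq_totient_add hφ]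
    ring

theorem ptn_three_mul (n : ℕ)
    (hptn : ∑ i ∈ Finset.Icc 1 (R n), Nat.totient^[i] n = n)
    (hp : Nat.Prime (4 * n + 1)) :
    ∑ i ∈ Finset.Icc 1 (R (3 * (4 * n + 1))), Nat.totient^[i] (3 * (4 * n + 1))
      = 3 * (4 * n + 1) := by
  change iterTotientSum n = n at hptn
  have hn0 : n ≠ 0 := by rintro rfl; exact Nat.not_prime_one hp
  have hn_odd : Odd n := odd_of_iterTotientSum_eq_self hn0 hptn
  have hφ : φ (3 * (4 * n + 1)) = 4 * (2 * n) := by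
    rw [totient_mul ((Nat.coprime_primes prime_three hp).mpr (by omega)), totient_prime hp,
      totient_prime prime_three]
    omega
  have hφ_two_mul : φ (2 * n) = φ n := totient_two_mul_of_odd hn_odd
  change iterTotientSum (3 * (4 * n + 1)) = _
  rw [iterTotientSum_eq_totient_add (by omega), hφ,
    iterTotientSum_four_mul (even_two_mul n) (by omega), iterTotientSum_congr_totient hφ_two_mul,
    hptn]
  ring
end
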